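/- For every condition (r, R) of the almost disjoint coding poset 𝔸_D(X), every d ∈ D with d ∉ X, and every n ∈ ℕ, there is a condition (s, S) ≤ (r, R) such that s ∩ d has at least n elements. (This is the density fact behind the coding property that the generic real has infinite intersection with every d ∉ X.) -/
import Mathlib


/-- `D` is an almost disjoint family: a collection of infinite subsets of `ℕ`
whose pairwise intersections are finite. -/
def IsAlmostDisjointFamily (D : Set (Set ℕ)) : Prop :=
  (∀ d ∈ D, d.Infinite) ∧ ∀ d ∈ D, ∀ e ∈ D, d ≠ e → (d ∩ e).Finite

/-- A condition of the almost disjoint coding poset `𝔸_D(X)`: a pair `(r, R)`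
where `r` is a finite subset of `ℕ` and `R` is a finite subset of `D`. -/
def ADCond (D : Set (Set ℕ)) : Type := {p : Finset ℕ × Finset (Set ℕ) // ↑p.2 ⊆ D}

/-- The order of `𝔸_D(X)`: `(s, S) ≤ (r, R)` iff `r ⊆ s`, `R ⊆ S`, and for every
`d ∈ R` with `d ∈ X` one has `s ∩ d = r ∩ d`. -/
def ADLe {D : Set (Set ℕ)} (X : Set (Set ℕ)) (q p : ADCond D) : Prop :=
  p.1.1 ⊆ q.1.1 ∧ p.1.2 ⊆ q.1.2 ∧
    ∀ d ∈ p.1.2, d ∈ X → (↑q.1.1 ∩ d : Set ℕ) = (↑p.1.1 ∩ d : Set ℕ)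

/-- Density: for every condition `(r, R)`, every `d ∈ D` with `d ∉ X`, and
every `n`, there is a stronger condition `(s, S)` such that `s ∩ d` has at
least `n` elements. -/
theorem adCoding_dense_infinite_intersection (D : Set (Set ℕ))
    (hD : IsAlmostDisjointFamily D) (X : Set (Set ℕ)) (hX : X ⊆ D)
    (p : ADCond D) (d : Set ℕ) (hd : d ∈ D) (hdX : d ∉ X) (n : ℕ) :
    ∃ q : ADCond D, ADLe X q p ∧ n ≤ ((↑q.1.1 ∩ d : Set ℕ)).ncard := by
  classical
  set F : Set ℕ := ⋃ e ∈ (↑p.1.2 ∩ X : Set (Set ℕ)), d ∩ e with hF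
  have hFfin : F.Finite := by
    apply Set.Finite.biUnion (p.1.2.finite_toSet.subset Set.inter_subset_left)
    intro e he
    exact hD.2 d hd e (hX he.2) (fun h => hdX (h ▸ he.2))
  have hTinf : (d \ F).Infinite := (hD.1 d hd).diff hFfin
  obtain ⟨t, ht, htc⟩ := hTinf.exists_subset_card_eq n
  refine ⟨⟨(p.1.1 ∪ t, p.1.2), p.2⟩, ⟨Finset.subset_union_left, subset_rfl, ?_⟩, ?_⟩
  · intro e he heX
    have htd : Disjoint (↑t : Set ℕ) e := by
      refine Set.disjoint_left.mpr fun x hx hxe => ?_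
      have := ht hx
      exact this.2 (Set.mem_biUnion ⟨he, heX⟩ ⟨this.1, hxe⟩)
    simp only [Finset.coe_union]
    rw [Set.union_inter_distrib_right, (Set.disjoint_iff_inter_eq_empty.mp htd),
      Set.union_empty]
  · have hsub : (↑t : Set ℕ) ⊆ (↑(p.1.1 ∪ t) : Set ℕ) ∩ d := by
      intro x hx
      exact ⟨by simp [Finset.mem_union, hx], (ht hx).1⟩
    calc n = (↑t : Set ℕ).ncard := by simp [htc]
      _ ≤ _ := Set.ncard_le_ncard hsub (((p.1.1 ∪ t).finite_toSet.inter_of_left d))
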